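/- arXiv:2311.12997 — 2 statements merged into one kernel-verified Lean document; each statement's English description precedes it below -/
import Mathlib

section
/- With the position encodings satisfying P^T P = [[I₃,I₃],[I₃,I₃]] (3×3 identity blocks) and the key matrix K projecting onto the task-token coordinates, the linear attention output (KZ)(M ⊙ Z^T Q Z) added to Z places, at each data position j ∈ {4,5,6}, the sum of the original token at position j and the task token from position j−3; the task-token positions are doubled. -/
/-!
Split `Z` by rows into the token block `T` and the position block `P`. Then `Q = diag(0, I)`
gives `ZᵀQZ = PᵀP`, the indicator of `j ≡ i (mod 3)`, and `K = diag(D, 0)` with `D` the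
projection onto the task coordinates gives `KZ = [DT; 0]`. So the token row `r` of the attention
output at position `i` is `∑_{j ≤ i, j ≡ i (mod 3)} (DT) r j`. On task coordinates only the task
tokens `j < 3` contribute, leaving the single term `j = i mod 3`; on data coordinates both sides
vanish.
-/

open Matrix

namespace Matrix

variable {R m₁ m₂ n : Type*} [Fintype m₁] [Fintype m₂] [DecidableEq m₂] [Semiring R]

lemma transpose_fromRows_mul_fromBlocks_zero_one_mul_fromRows
    (A₁ : Matrix m₁ n R) (A₂ : Matrix m₂ n R) :
    (fromRows A₁ A₂)ᵀ * (fromBlocks 0 0 0 1 : Matrix (m₁ ⊕ m₂) (m₁ ⊕ m₂) R) * fromRows A₁ A₂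
      = A₂ᵀ * A₂ := by
  rw [Matrix.mul_assoc, fromBlocks_mul_fromRows, transpose_fromRows, fromCols_mul_fromRows]
  simp

end Matrix

lemma Fin.sum_ite_le_and_mod_eq_of_support_lt {R : Type*} [AddCommMonoid R] {N : ℕ} (n : ℕ)
    (f : Fin N → R) (hf : ∀ j : Fin N, n ≤ j.val → f j = 0) (i : Fin N) :
    ∑ j, (if j ≤ i ∧ j.val % n = i.val % n then f j else 0)
      = f ⟨i.val % n, (Nat.mod_le _ _).trans_lt i.isLt⟩ := by
  rw [Finset.sum_eq_single_of_mem _ (Finset.mem_univ _)]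
  · exact if_pos ⟨Fin.le_def.2 (Nat.mod_le _ _), Nat.mod_mod _ _⟩
  · rintro j - hj
    rw [ite_eq_right_iff]
    rintro ⟨-, hmod⟩
    refine hf j (not_lt.1 fun hjn => hj (Fin.ext ?_))
    exact (Nat.mod_eq_of_lt hjn).symm.trans hmod

/-- With position encodings satisfying `PᵀP = [[I₃,I₃],[I₃,I₃]]` (encoded via
`pᵢ·pⱼ = 1` iff `i ≡ j (mod 3)`), the key matrix `K` projecting onto the task-token
coordinates (coordinates `≥ d_v`), and the query matrix `Q` projecting onto the position
coordinates, the causally masked linear attention output `(KZ)(M ⊙ ZᵀQZ)` added to `Z`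
places at each position `i` (on token coordinates) the sum of the original token at `i` and the
task token from position `i mod 3`: task positions are doubled, and each data position `j ∈
{4,5,6}` receives its original token plus the task token from position `j − 3`. -/
theorem stmt14 (dx dp dv : ℕ)
    (tok : Fin 6 → Fin dx → ℝ) (p : Fin 6 → Fin dp → ℝ)
    (htask : ∀ i : Fin 6, i.val < 3 → ∀ r : Fin dx, r.val < dv → tok i r = 0)
    (hdata : ∀ i : Fin 6, 3 ≤ i.val → ∀ r : Fin dx, dv ≤ r.val → tok i r = 0)
    (hp : ∀ i j : Fin 6, ∑ r, p i r * p j r = if i.val % 3 = j.val % 3 then (1 : ℝ) else 0) :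
    let Z : Matrix (Fin dx ⊕ Fin dp) (Fin 6) ℝ :=
      Matrix.of fun r c => Sum.elim (fun rx => tok c rx) (fun rp => p c rp) r
    let Q : Matrix (Fin dx ⊕ Fin dp) (Fin dx ⊕ Fin dp) ℝ :=
      Matrix.of fun r r' =>
        match r, r' with
        | Sum.inr a, Sum.inr b => if a = b then (1 : ℝ) else 0
        | _, _ => 0
    let K : Matrix (Fin dx ⊕ Fin dp) (Fin dx ⊕ Fin dp) ℝ :=
      Matrix.of fun r r' =>
        match r, r' with
        | Sum.inl a, Sum.inl b => if a = b ∧ dv ≤ a.val then (1 : ℝ) else 0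
        | _, _ => 0
    let M : Matrix (Fin 6) (Fin 6) ℝ := Matrix.of fun i j => if i ≤ j then (1 : ℝ) else 0
    let A := K * Z * Matrix.hadamard M (Zᵀ * Q * Z)
    ∀ (i : Fin 6) (r : Fin dx),
      (A + Z) (Sum.inl r) i
        = Z (Sum.inl r) i + tok ⟨i.val % 3, by omega⟩ r := by
  intro Z Q K M A i r
  have hZ : Z = fromRows (of fun a c => tok c a) (of fun a c => p c a) := by
    ext (a | a) c <;> rfl
  have hQ : Q = fromBlocks 0 0 0 1 := by
    ext (a | a) (b | b) <;> simp [Q, one_apply]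
  have hK : K = fromBlocks (diagonal fun a => if dv ≤ a.val then 1 else 0) 0 0 0 := by
    ext (a | a) (b | b) <;> simp [K, diagonal_apply, ite_and]
  have hgram : Zᵀ * Q * Z = of fun k j => if k.val % 3 = j.val % 3 then 1 else 0 := by
    rw [hZ, hQ, transpose_fromRows_mul_fromBlocks_zero_one_mul_fromRows]
    ext k j
    simp [mul_apply, hp]
  have hA : A (Sum.inl r) i = ∑ j,
      if j ≤ i ∧ j.val % 3 = i.val % 3 then (if dv ≤ r.val then tok j r else 0) else 0 := by
    show (K * Z * M ⊙ (Zᵀ * Q * Z)) (Sum.inl r) i = _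
    rw [hgram, hK, hZ, fromBlocks_mul_fromRows, mul_apply]
    refine Finset.sum_congr rfl fun j _ => ?_
    simp only [fromRows_apply_inl, hadamard_apply, M, of_apply, Matrix.zero_mul, add_zero,
      diagonal_mul]
    split_ifs <;> simp_all
  rw [Matrix.add_apply, hA, Fin.sum_ite_le_and_mod_eq_of_support_lt 3 _ (fun j hj => ?_)]
  · split_ifs with h
    · exact add_comm _ _
    · rw [htask _ (Nat.mod_lt _ three_pos) r (not_le.1 h), zero_add, add_zero]
  · split_ifs with h
    · exact hdata j hj r h
    · rfl
end

section
/- There exists a one-layer Transformer (linear attention with causal mask, followed by a two-layer ReLU MLP, with residual connections) whose weights realize exact compositional generalization on the step-by-step task: for every choice of functions F₁, F₂, F₃ : X_d → X_d from a fixed finite family F and every data token x_d, the model autoregressively maps the prompt [x_{F₁}, x_{F₂}, x_{F₃}, x_d] to the outputs [F₁(x_d), F₂(F₁(x_d)), F₃(F₂(F₁(x_d)))]. -/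
open Matrix

/-!
Use one-hot position encodings. With attention scores `[j + 3 = c]` between positions `j` and `c`,
the attention layer adds to column `c` of the residual stream the token from three positions
earlier, so at the position producing the `t`-th output the stream holds `e_f + e_u`, where `f` is
the `t`-th function token and `u` the current data token. The MLP has one ReLU unit per pair
`(f, u)`; it fires exactly on `e_f + e_u` and writes `3 e_{f u}`. Reading off the token
coordinates, `f u` scores at least `3` and every other token at most `2`.
-/

namespace CompositionTransformer

section Layer

variable {ι κ : Type*} [Fintype ι] [Fintype κ] {n : ℕ}

def causalMask (n : ℕ) : Matrix (Fin n) (Fin n) ℝ := of fun i j => if i ≤ j then 1 else 0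

def attn (Q K : Matrix ι ι ℝ) (Z : Matrix ι (Fin n) ℝ) : Matrix ι (Fin n) ℝ :=
  K * Z * hadamard (causalMask n) (Zᵀ * Q * Z)

def mlp (W₁ : Matrix κ ι ℝ) (W₂ : Matrix ι κ ℝ) (H : Matrix ι (Fin n) ℝ) : Matrix ι (Fin n) ℝ :=
  W₂ * (W₁ * H).map (max 0)

def transformer (Q K : Matrix ι ι ℝ) (W₁ : Matrix κ ι ℝ) (W₂ : Matrix ι κ ℝ)
    (Z : Matrix ι (Fin n) ℝ) : Matrix ι (Fin n) ℝ :=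
  mlp W₁ W₂ (attn Q K Z + Z) + (attn Q K Z + Z)

end Layer

lemma fromRows_add_fromRows {R m₁ m₂ n : Type*} [Add R] (A₁ B₁ : Matrix m₁ n R)
    (A₂ B₂ : Matrix m₂ n R) : fromRows A₁ A₂ + fromRows B₁ B₂ = fromRows (A₁ + B₁) (A₂ + B₂) := by
  ext (_ | _) _ <;> rfl

def lagMatrix (n k : ℕ) : Matrix (Fin n) (Fin n) ℝ :=
  of fun j c => if (j : ℕ) + k = c then 1 else 0

lemma hadamard_causalMask_lagMatrix (n k : ℕ) :
    hadamard (causalMask n) (lagMatrix n k) = lagMatrix n k := by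
  ext j c
  by_cases h : (j : ℕ) + k = c
  · have : j ≤ c := Fin.le_def.mpr (by omega)
    simp [causalMask, lagMatrix, h, this]
  · simp [lagMatrix, h]

section Embedding

variable {T : Type} [DecidableEq T] {n : ℕ}

def tokenOneHot (toks : Fin n → T) : Matrix T (Fin n) ℝ :=
  of fun x c => if x = toks c then 1 else 0

def embed (toks : Fin n → T) : Matrix (T ⊕ Fin n) (Fin n) ℝ :=
  of fun r c => Sum.elim (fun x => if x = toks c then 1 else 0)
    (fun i => (1 : Matrix (Fin n) (Fin n) ℝ) i c) r

lemma embed_eq_fromRows (toks : Fin n → T) : embed toks = fromRows (tokenOneHot toks) 1 := by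
  ext (_ | _) _ <;> rfl

lemma tokenOneHot_mul_lagMatrix_apply (toks : Fin n → T) {k : ℕ} {j c : Fin n}
    (hjc : (j : ℕ) + k = c) (x : T) :
    (tokenOneHot toks * lagMatrix n k) x c = if x = toks j then 1 else 0 := by
  rw [mul_apply, Finset.sum_eq_single j]
  · simp [tokenOneHot, lagMatrix, hjc]
  · intro i _ hij
    have : (i : ℕ) + k ≠ c := fun h => hij (Fin.ext (by omega))
    simp [lagMatrix, this]
  · simp

variable (T) in
def queryMatrix (n k : ℕ) : Matrix (T ⊕ Fin n) (T ⊕ Fin n) ℝ := fromBlocks 0 0 0 (lagMatrix n k)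

variable (T) in
def keyMatrix (n : ℕ) : Matrix (T ⊕ Fin n) (T ⊕ Fin n) ℝ := fromBlocks 1 0 0 0

variable (T) in
def unembed (n : ℕ) : Matrix T (T ⊕ Fin n) ℝ := fromCols 1 0

lemma attn_embed [Fintype T] (toks : Fin n → T) (k : ℕ) :
    attn (queryMatrix T n k) (keyMatrix T n) (embed toks)
      = fromRows (tokenOneHot toks * lagMatrix n k) 0 := by
  simp [attn, queryMatrix, keyMatrix, embed_eq_fromRows, transpose_fromRows,
    fromCols_mul_fromBlocks, fromCols_mul_fromRows, fromBlocks_mul_fromRows,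
    hadamard_causalMask_lagMatrix]

end Embedding

lemma max_zero_indicator_add_indicator_sub_one (p q : Prop) [Decidable p] [Decidable q] :
    max 0 ((if p then 1 else 0) + (if q then 1 else 0) + -1 : ℝ) = if p ∧ q then 1 else 0 := by
  by_cases p <;> by_cases q <;> simp [*]

variable {V F : Type} [DecidableEq V] [DecidableEq F]

variable (V F) in
def pairIndicator : Matrix (F × V) (V ⊕ F) ℝ :=
  of fun gu x => (if x = Sum.inr gu.1 then 1 else 0) + (if x = Sum.inl gu.2 then 1 else 0)

/-- The bias `-1` is read off the one-hot position coordinates, which sum to `1`. -/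
def ruleDetector (n : ℕ) : Matrix (F × V) ((V ⊕ F) ⊕ Fin n) ℝ :=
  fromCols (pairIndicator V F) (of fun _ _ => -1)

def ruleTable (app : F → V → V) : Matrix (V ⊕ F) (F × V) ℝ :=
  of fun x gu => if x = Sum.inl (app gu.1 gu.2) then 1 else 0

def ruleOutput (n : ℕ) (app : F → V → V) : Matrix ((V ⊕ F) ⊕ Fin n) (F × V) ℝ :=
  fromRows (3 • ruleTable app) 0

lemma pairIndicator_mul_apply [Fintype V] [Fintype F] {m : Type*} (M : Matrix (V ⊕ F) m ℝ)
    (gu : F × V) (c : m) :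
    (pairIndicator V F * M) gu c = M (Sum.inr gu.1) c + M (Sum.inl gu.2) c := by
  simp [pairIndicator, mul_apply, add_mul, Finset.sum_add_distrib]

lemma ruleTable_mul_apply [Fintype V] [Fintype F] {m : Type*} (app : F → V → V)
    (R : Matrix (F × V) m ℝ) (x : V ⊕ F) (c : m) :
    (ruleTable app * R) x c = ∑ gu : F × V, if x = Sum.inl (app gu.1 gu.2) then R gu c else 0 := by
  simp [ruleTable, mul_apply]

variable [Fintype V] [Fintype F] {n : ℕ}

def stepLogits (k : ℕ) (app : F → V → V) (toks : Fin n → V ⊕ F) : Matrix (V ⊕ F) (Fin n) ℝ :=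
  unembed (V ⊕ F) n * transformer (queryMatrix (V ⊕ F) n k) (keyMatrix (V ⊕ F) n)
    (ruleDetector n) (ruleOutput n app) (embed toks)

lemma stepLogits_eq (k : ℕ) (app : F → V → V) (toks : Fin n → V ⊕ F) :
    stepLogits k app toks
      = 3 • ruleTable app * (pairIndicator V F * (tokenOneHot toks * lagMatrix n k
          + tokenOneHot toks) + of fun _ _ => -1).map (max 0)
        + (tokenOneHot toks * lagMatrix n k + tokenOneHot toks) := by
  rw [stepLogits, transformer, mlp, attn_embed, embed_eq_fromRows, fromRows_add_fromRows,
    ruleOutput, ruleDetector, fromCols_mul_fromRows, fromRows_mul, fromRows_add_fromRows, unembed,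
    fromCols_mul_fromRows]
  simp

lemma stepLogits_apply (app : F → V → V) (toks : Fin n → V ⊕ F) {k : ℕ} {j c : Fin n}
    (hjc : (j : ℕ) + k = c) {g : F} {u : V} (hg : toks j = Sum.inr g)
    (hu : toks c = Sum.inl u) (y : V ⊕ F) :
    stepLogits k app toks y c
      = 3 * (if y = Sum.inl (app g u) then 1 else 0)
          + ((if y = Sum.inr g then 1 else 0) + (if y = Sum.inl u then 1 else 0)) := by
  rw [stepLogits_eq]
  set X := tokenOneHot toks * lagMatrix n k + tokenOneHot toks with hX
  have residual (x : V ⊕ F) :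
      X x c = (if x = Sum.inr g then 1 else 0) + (if x = Sum.inl u then 1 else 0) := by
    rw [hX, Matrix.add_apply, tokenOneHot_mul_lagMatrix_apply toks hjc, hg, tokenOneHot, of_apply,
      hu]
  have detect (gu : F × V) :
      max 0 ((pairIndicator V F * X + of fun _ _ => -1 : Matrix (F × V) (Fin n) ℝ) gu c)
        = if gu = (g, u) then 1 else 0 := by
    rw [Matrix.add_apply, pairIndicator_mul_apply, residual, residual, of_apply]
    simpa [Prod.ext_iff] using max_zero_indicator_add_indicator_sub_one (gu.1 = g) (gu.2 = u)
  rw [Matrix.add_apply, residual, smul_mul, Matrix.smul_apply, ruleTable_mul_apply]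
  simp only [map_apply, detect]
  rw [Finset.sum_eq_single (g, u) (fun gu _ h => by simp [h]) (by simp)]
  simp [mul_ite]

lemma stepLogits_lt (app : F → V → V) (toks : Fin n → V ⊕ F) {k : ℕ} {j c : Fin n}
    (hjc : (j : ℕ) + k = c) {g : F} {u : V} (hg : toks j = Sum.inr g)
    (hu : toks c = Sum.inl u) {y : V ⊕ F} (hy : y ≠ Sum.inl (app g u)) :
    stepLogits k app toks y c < stepLogits k app toks (Sum.inl (app g u)) c := by
  rw [stepLogits_apply app toks hjc hg hu, stepLogits_apply app toks hjc hg hu, if_neg hy,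
    if_pos rfl]
  split_ifs <;> norm_num

end CompositionTransformer

open CompositionTransformer

/-- Existence of a one-layer Transformer (causally masked linear attention plus a two-layer
ReLU MLP with residual connections, followed by an unembedding) that exactly solves the
step-by-step composition task: for every choice of functions `f₁ f₂ f₃` from a fixed finite
family (acting on data tokens via `app`) and every data token `v`, feeding the sequence
`[x_{f₁}, x_{f₂}, x_{f₃}, x_v, x_{f₁ v}, x_{f₂ (f₁ v)}]` (one-hot tokens with concatenated
position encodings), the logits at positions 4, 5, 6 are uniquely maximized at
`f₁(v)`, `f₂(f₁(v))`, `f₃(f₂(f₁(v)))` respectively — i.e. the model autoregressively generates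
the step-by-step outputs for all compositions. -/
theorem stmt15 (V F : Type) [Fintype V] [Fintype F] [DecidableEq V] [DecidableEq F]
    (app : F → V → V) :
    ∃ (dp : ℕ) (p : Fin 6 → Fin dp → ℝ)
      (Q K : Matrix ((V ⊕ F) ⊕ Fin dp) ((V ⊕ F) ⊕ Fin dp) ℝ)
      (W1 : Matrix (F × V) ((V ⊕ F) ⊕ Fin dp) ℝ)
      (W2 : Matrix ((V ⊕ F) ⊕ Fin dp) (F × V) ℝ)
      (We : Matrix (V ⊕ F) ((V ⊕ F) ⊕ Fin dp) ℝ),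
      ∀ (f1 f2 f3 : F) (v : V),
        let toks : Fin 6 → V ⊕ F :=
          ![Sum.inr f1, Sum.inr f2, Sum.inr f3, Sum.inl v,
            Sum.inl (app f1 v), Sum.inl (app f2 (app f1 v))]
        let Z : Matrix ((V ⊕ F) ⊕ Fin dp) (Fin 6) ℝ :=
          Matrix.of fun r c =>
            Sum.elim (fun rx => if rx = toks c then (1 : ℝ) else 0) (fun rp => p c rp) r
        let M : Matrix (Fin 6) (Fin 6) ℝ := Matrix.of fun i j => if i ≤ j then (1 : ℝ) else 0
        let A := K * Z * Matrix.hadamard M (Zᵀ * Q * Z)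
        let H := A + Z
        let Tr := W2 * (Matrix.of fun q c => max 0 ((W1 * H) q c)) + H
        let logits := We * Tr
        let target : Fin 3 → V := ![app f1 v, app f2 (app f1 v), app f3 (app f2 (app f1 v))]
        ∀ (t : Fin 3) (y : V ⊕ F), y ≠ Sum.inl (target t) →
          logits y (Fin.cast (by norm_num) (t.addNat 3))
            < logits (Sum.inl (target t)) (Fin.cast (by norm_num) (t.addNat 3)) := by
  refine ⟨6, fun c i => (1 : Matrix (Fin 6) (Fin 6) ℝ) i c, queryMatrix (V ⊕ F) 6 3,
    keyMatrix (V ⊕ F) 6, ruleDetector 6, ruleOutput 6 app, unembed (V ⊕ F) 6, ?_⟩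
  intro f1 f2 f3 v toks _ _ _ _ _ _ target t y hy
  fin_cases t
  · exact stepLogits_lt app toks (j := 0) rfl rfl rfl hy
  · exact stepLogits_lt app toks (j := 1) rfl rfl rfl hy
  · exact stepLogits_lt app toks (j := 2) rfl rfl rfl hy
end
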